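/- arXiv:1204.5074 — 5 statements merged into one kernel-verified Lean document; each statement's English description precedes it below -/
import Mathlib

section
/- Let q ≥ 1 and 0 ≤ k ≤ q. Let Ẽ₁^{(k)} be the matrix obtained from E₁^{⊗k} (a q^k × q^k matrix with rows and columns indexed by [q]^k) by deleting every row and every column whose index tuple contains two equal entries. Then the sum of all entries of Ẽ₁^{(k)} is non-negative. -/
noncomputable section

namespace ED

/-- The `q × q` matrix all of whose entries are `1/q`. -/
def E0 (q : ℕ) : Matrix (Fin q) (Fin q) ℝ := Matrix.of fun _ _ => 1 / q

/-- `E₁ = I - E₀`. -/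
def E1 (q : ℕ) : Matrix (Fin q) (Fin q) ℝ :=
  Matrix.of fun x y => (if x = y then 1 else 0) - 1 / q

/-- The projector `E_k^{(m)}` of the Hamming association scheme. -/
def Ek (q m k : ℕ) : Matrix (Fin m → Fin q) (Fin m → Fin q) ℝ :=
  Matrix.of fun x y => ∑ S ∈ Finset.powersetCard k (Finset.univ : Finset (Fin m)),
    ∏ i, (if i ∈ S then E1 q (x i) (y i) else E0 q (x i) (y i))

/-- The `q × q²` matrix with all entries `q^{-3/2}`. -/
def F0 (q : ℕ) : Matrix (Fin q) (Fin q × Fin q) ℝ :=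
  Matrix.of fun _ _ => ((q : ℝ) * Real.sqrt q)⁻¹

/-- The `q × q²` matrix with entries `q^{-1/2}((E₁)_{x,y₁} + (E₁)_{x,y₂})`. -/
def F1 (q : ℕ) : Matrix (Fin q) (Fin q × Fin q) ℝ :=
  Matrix.of fun x y => (Real.sqrt q)⁻¹ * (E1 q x y.1 + E1 q x y.2)

/-- `F = F₀ + F₁`. -/
def FF (q : ℕ) : Matrix (Fin q) (Fin q × Fin q) ℝ := F0 q + F1 q

/-- The increasing enumeration of `[n] \ {a,b}`. -/
def embCompl {n : ℕ} (a b : Fin n) (h : a ≠ b) : Fin (n - 2) → Fin n :=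
  fun i => (({a, b}ᶜ : Finset (Fin n)).orderIsoOfFin
    (by rw [Finset.card_compl, Finset.card_pair h, Fintype.card_fin]) i : Fin n)

/-- For a `q^{n-1} × q^n` matrix `G` (rows indexed by `[q] × [q]^{n-2}`, columns by
`([q] × [q]) × [q]^{n-2}`), the matrix `G_{a,b}` with rows indexed by strings
`x ∈ [q]^n` with `x a = x b`, and columns by `[q]^n`. -/
def subMat {n q : ℕ}
    (G : Matrix (Fin q × (Fin (n - 2) → Fin q)) ((Fin q × Fin q) × (Fin (n - 2) → Fin q)) ℝ)
    (a b : Fin n) (h : a ≠ b) :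
    Matrix {x : Fin n → Fin q // x a = x b} (Fin n → Fin q) ℝ :=
  Matrix.of fun x y =>
    G (x.1 a, fun i => x.1 (embCompl a b h i)) ((y a, y b), fun i => y (embCompl a b h i))

/-- The spectral norm (largest singular value) of a real matrix. -/
def specNorm {m n : Type*} [Fintype m] [Fintype n] [DecidableEq n] (A : Matrix m n ℝ) : ℝ :=
  ‖LinearMap.toContinuousLinearMap (Matrix.toEuclideanLin A)‖

end ED

/-! `E₁ = I - J/q` is an orthogonal projection, hence positive semidefinite. Kronecker powers
of positive semidefinite matrices are positive semidefinite (write `A = BᴴB`, then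
`A^{⊗k} = (B^{⊗k})ᴴ B^{⊗k}`), and the sum of the entries of a principal submatrix of a
positive semidefinite `M` is `vᴴ M v ≥ 0` for the indicator vector `v` of its index set. -/

open scoped MatrixOrder ComplexOrder

namespace Matrix

variable {ι l m n R : Type*} [Fintype ι]

variable (ι) in
def kroneckerPow [CommMonoid R] (A : Matrix m n R) :
    Matrix (ι → m) (ι → n) R :=
  of fun x y => ∏ i, A (x i) (y i)

theorem kroneckerPow_mul [CommSemiring R] [Fintype n] [DecidableEq ι]
    (A : Matrix l n R) (B : Matrix n m R) :
    kroneckerPow ι (A * B) = kroneckerPow ι A * kroneckerPow ι B := by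
  ext x y
  simp only [kroneckerPow, mul_apply, of_apply, Finset.prod_univ_sum, Fintype.piFinset_univ,
    Finset.prod_mul_distrib]

theorem conjTranspose_kroneckerPow [CommSemiring R] [StarRing R] (A : Matrix m n R) :
    (kroneckerPow ι A)ᴴ = kroneckerPow ι Aᴴ := by
  ext x y
  simp [kroneckerPow, star_prod]

theorem PosSemidef.kroneckerPow {𝕜 : Type*} [RCLike 𝕜] [Fintype n] {A : Matrix n n 𝕜}
    (hA : A.PosSemidef) : (kroneckerPow ι A).PosSemidef := by
  classical
  obtain ⟨B, rfl⟩ := CStarAlgebra.nonneg_iff_eq_star_mul_self.mp hA.nonneg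
  simpa [kroneckerPow_mul, conjTranspose_kroneckerPow, star_eq_conjTranspose] using
    posSemidef_conjTranspose_mul_self (Matrix.kroneckerPow ι B)

theorem PosSemidef.sum_sum_nonneg [CommRing R] [StarRing R] [PartialOrder R]
    [StarOrderedRing R] [Fintype n] {M : Matrix n n R} (hM : M.PosSemidef) (s : Finset n) :
    0 ≤ ∑ i ∈ s, ∑ j ∈ s, M i j := by
  classical
  simpa [dotProduct, mulVec, apply_ite star, ite_mul, Finset.sum_ite_mem] using
    hM.dotProduct_mulVec_nonneg fun i => if i ∈ s then 1 else 0

end Matrix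

namespace ED

theorem E1_eq_one_sub_E0 (q : ℕ) : E1 q = 1 - E0 q := by
  ext i j
  simp [E1, E0, Matrix.one_apply]

theorem E0_isStarProjection (q : ℕ) : IsStarProjection (E0 q) where
  isIdempotentElem := by
    ext i j
    have hq : (q : ℝ) ≠ 0 := Nat.cast_ne_zero.mpr i.pos.ne'
    simp only [E0, Matrix.mul_apply, Matrix.of_apply, Finset.sum_const, Finset.card_univ,
      Fintype.card_fin, nsmul_eq_mul]
    field_simp
  isSelfAdjoint := by
    ext i j
    simp [E0]

theorem E1_posSemidef (q : ℕ) : (E1 q).PosSemidef := by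
  rw [← Matrix.nonneg_iff_posSemidef, E1_eq_one_sub_E0]
  exact (E0_isStarProjection q).one_sub.nonneg

end ED

open ED in
theorem stmt1_general (q k : ℕ) :
    0 ≤ ∑ x ∈ Finset.univ.filter (fun x : Fin k → Fin q => Function.Injective x),
          ∑ y ∈ Finset.univ.filter (fun y : Fin k → Fin q => Function.Injective y),
            ∏ i, E1 q (x i) (y i) :=
  (E1_posSemidef q).kroneckerPow.sum_sum_nonneg _

open ED in
/-- The sum of the entries of `E₁^{⊗k}` restricted to rows and columns indexed by tuples
with pairwise distinct entries is non-negative. -/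
theorem stmt1 (q k : ℕ) (hq : 1 ≤ q) (hk : k ≤ q) :
    0 ≤ ∑ x ∈ Finset.univ.filter (fun x : Fin k → Fin q => Function.Injective x),
          ∑ y ∈ Finset.univ.filter (fun y : Fin k → Fin q => Function.Injective y),
            ∏ i, E1 q (x i) (y i) :=
  stmt1_general q k
end
end

section
/- For all integers 0 ≤ k ≤ ℓ ≤ q, g(k,ℓ,q) ≥ 0. -/
noncomputable section

namespace ED

/-- `g(k,ℓ,q) = Σ_{(y₁,…,y_k) ∈ [ℓ]^k, pairwise distinct} ∏ᵢ (q·[yᵢ = i] − 1)`. -/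
def g (k ℓ q : ℕ) : ℝ :=
  ∑ y ∈ Finset.univ.filter (fun y : Fin k → Fin ℓ => Function.Injective y),
    ∏ i, ((q : ℝ) * (if (y i : ℕ) = (i : ℕ) then 1 else 0) - 1)

end ED

/-!
Expanding the product over the subsets `t` of the positions where `yᵢ = i` is chosen, and counting
the injections that fix `t`, gives `(ℓ-k)! g(k,ℓ,q) = Σ_t q^|t| (-1)^(k-|t|) (ℓ-|t|)!`. This is
`L_c((q - X)^k)` for `c = ℓ - k`, where `L_c` is the linear functional `X^j ↦ (j+c)!` on `ℝ[X]`
(integration against `x^c e^(-x)` on `[0, ∞)`). The rules `L_c(X p) = L_{c+1}(p)` and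
`L_{c+1}(p) = (c+1) L_c(p) + L_{c+1}(p')` give, for `T(k,c) = L_c((q - X)^k)`, the recursion
`T(k+2,c) = (q-c-1) T(k+1,c) + (k+1) T(k,c+1)` with `T(0,c) = c!` and `T(1,c) = (q-c-1) c!`,
so `T(k,c) ≥ 0` whenever `k + c ≤ q`.
-/

open Finset Function Polynomial
open scoped Nat

theorem prod_mul_boole_sub_one {ι R : Type*} [CommRing R] [DecidableEq ι] (s : Finset ι)
    (p : ι → Prop) [DecidablePred p] (a : R) :
    ∏ i ∈ s, (a * (if p i then 1 else 0) - 1) =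
      ∑ t ∈ s.powerset with ∀ i ∈ t, p i, a ^ #t * (-1) ^ (#s - #t) := by
  simp only [sub_eq_add_neg, prod_add, prod_mul_distrib, prod_const, prod_boole, sum_filter]
  refine sum_congr rfl fun t ht => ?_
  rw [card_sdiff_of_subset (mem_powerset.mp ht)]
  split_ifs <;> simp

section InjectiveExtensions

variable {α β : Type*} [Fintype α] [Fintype β] [DecidableEq α] [DecidableEq β]

def injectiveExtensionsEquiv (e : α ↪ β) (s : Finset α) :
    {y : α → β // Injective y ∧ ∀ a ∈ s, y a = e a} ≃ ({a // a ∉ s} ↪ {b // b ∉ s.map e}) where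
  toFun y :=
    { toFun a := ⟨y.1 a, fun hmem => by
        obtain ⟨j, hj, hje⟩ := mem_map.mp hmem
        rw [← y.2.2 j hj] at hje
        exact a.2 (y.2.1 hje ▸ hj)⟩
      inj' a b hab := Subtype.ext (y.2.1 (congrArg Subtype.val hab)) }
  invFun z := ⟨fun a => if h : a ∈ s then e a else z ⟨a, h⟩, by
      intro a b hab
      by_cases ha : a ∈ s <;> by_cases hb : b ∈ s <;> simp only [ha, hb, dite_true, dite_false] at hab
      · exact e.injective hab
      · exact absurd (hab ▸ mem_map_of_mem e ha) (z ⟨b, hb⟩).2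
      · exact absurd (hab ▸ mem_map_of_mem e hb) (z ⟨a, ha⟩).2
      · exact congrArg Subtype.val (z.injective (Subtype.ext hab)),
    fun a ha => dif_pos ha⟩
  left_inv y := by
    ext a
    by_cases ha : a ∈ s
    · simp [ha, y.2.2 a ha]
    · simp [ha]; rfl
  right_inv z := by
    ext a
    simp [a.2]

theorem card_injective_eqOn (e : α ↪ β) (s : Finset α) :
    #{y : α → β | Injective y ∧ ∀ a ∈ s, y a = e a} =
      (Fintype.card β - #s).descFactorial (Fintype.card α - #s) := by
  rw [← Fintype.card_subtype, Fintype.card_congr (injectiveExtensionsEquiv e s),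
    Fintype.card_embedding_eq, Fintype.card_subtype_compl, Fintype.card_subtype_compl,
    Fintype.card_coe, Fintype.card_coe, card_map]

theorem sum_injective_prod_mul_boole_sub_one {R : Type*} [CommRing R] (e : α ↪ β) (a : R) :
    ∑ y : α → β with Injective y, ∏ i, (a * (if y i = e i then 1 else 0) - 1) =
      ∑ t ∈ (univ : Finset α).powerset, a ^ #t * (-1) ^ (Fintype.card α - #t) *
        (Fintype.card β - #t).descFactorial (Fintype.card α - #t) := by
  simp only [prod_mul_boole_sub_one, card_univ]
  rw [sum_comm' (t' := univ.powerset)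
    (s' := fun t => {y : α → β | Injective y ∧ ∀ a ∈ t, y a = e a}) (fun y t => by simp)]
  refine sum_congr rfl fun t _ => ?_
  rw [sum_const, card_injective_eqOn, nsmul_eq_mul, mul_comm]

end InjectiveExtensions

namespace ED

def factorialFunctional (c : ℕ) : ℝ[X] →ₗ[ℝ] ℝ :=
  lsum fun j => ((j + c)! : ℝ) • LinearMap.id

section FactorialFunctional

variable (c : ℕ)

theorem factorialFunctional_monomial (j : ℕ) (a : ℝ) :
    factorialFunctional c (monomial j a) = a * (j + c)! := by
  simp [factorialFunctional, sum_monomial_index, mul_comm]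

theorem factorialFunctional_one : factorialFunctional c 1 = c ! := by
  rw [← monomial_zero_one, factorialFunctional_monomial, one_mul, zero_add]

theorem factorialFunctional_X_mul (p : ℝ[X]) :
    factorialFunctional c (X * p) = factorialFunctional (c + 1) p := by
  induction p using Polynomial.induction_on' with
  | add p r hp hr => rw [mul_add, map_add, map_add, hp, hr]
  | monomial j a =>
    rw [X_mul_monomial, factorialFunctional_monomial, factorialFunctional_monomial, add_right_comm,
      add_assoc]

theorem factorialFunctional_succ (p : ℝ[X]) :
    factorialFunctional (c + 1) p =
      (c + 1) * factorialFunctional c p + factorialFunctional (c + 1) (derivative p) := by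
  induction p using Polynomial.induction_on' with
  | add p r hp hr => rw [map_add, map_add, derivative_add, map_add, hp, hr]; ring
  | monomial j a =>
    rw [derivative_monomial, factorialFunctional_monomial, factorialFunctional_monomial,
      factorialFunctional_monomial]
    cases j with
    | zero => simp [Nat.factorial_succ]; ring
    | succ j =>
      rw [show j + 1 + (c + 1) = j + 1 + c + 1 by omega, Nat.factorial_succ,
        show j + 1 - 1 + (c + 1) = j + 1 + c by omega]
      push_cast; ring

variable (q : ℝ) (k : ℕ)

theorem factorialFunctional_C_sub_X_pow_succ :
    factorialFunctional c ((C q - X) ^ (k + 1)) =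
      q * factorialFunctional c ((C q - X) ^ k) - factorialFunctional (c + 1) ((C q - X) ^ k) := by
  rw [pow_succ', sub_mul, map_sub, C_mul', map_smul, smul_eq_mul, factorialFunctional_X_mul]

theorem factorialFunctional_succ_C_sub_X_pow_succ :
    factorialFunctional (c + 1) ((C q - X) ^ (k + 1)) =
      (c + 1) * factorialFunctional c ((C q - X) ^ (k + 1))
        - (k + 1) * factorialFunctional (c + 1) ((C q - X) ^ k) := by
  have hderiv : derivative ((C q - X) ^ (k + 1)) = -((k + 1 : ℝ) • (C q - X) ^ k) := by
    rw [derivative_pow, derivative_sub, derivative_C, derivative_X, add_tsub_cancel_right, ← C_mul']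
    push_cast; ring
  rw [factorialFunctional_succ, hderiv, map_neg, map_smul, smul_eq_mul]
  ring

theorem factorialFunctional_C_sub_X_pow_add_two :
    factorialFunctional c ((C q - X) ^ (k + 2)) =
      (q - (c + 1)) * factorialFunctional c ((C q - X) ^ (k + 1))
        + (k + 1) * factorialFunctional (c + 1) ((C q - X) ^ k) := by
  rw [factorialFunctional_C_sub_X_pow_succ, factorialFunctional_succ_C_sub_X_pow_succ]
  ring

theorem factorialFunctional_C_sub_X_pow_eq_sum :
    factorialFunctional c ((C q - X) ^ k) =
      ∑ t ∈ (univ : Finset (Fin k)).powerset, q ^ #t * (-1) ^ (k - #t) * (k - #t + c)! := by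
  have hexpand : (C q - X) ^ k = ∑ t ∈ (univ : Finset (Fin k)).powerset,
      monomial (k - #t) (q ^ #t * (-1) ^ (k - #t)) := by
    rw [sub_eq_add_neg, ← Fin.prod_const, prod_add]
    refine sum_congr rfl fun t _ => ?_
    rw [prod_const, prod_const, card_univ_sdiff, Fintype.card_fin, neg_pow,
      ← C_mul_X_pow_eq_monomial]
    simp only [C_mul, C_pow, C_neg, C_1, mul_assoc]
  simp only [hexpand, map_sum, factorialFunctional_monomial]

end FactorialFunctional

theorem factorialFunctional_C_sub_X_pow_nonneg {q : ℝ} (k c : ℕ) (hq : (k + c : ℝ) ≤ q) :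
    0 ≤ factorialFunctional c ((C q - X) ^ k) := by
  induction k using Nat.twoStepInduction generalizing c with
  | zero => rw [pow_zero, factorialFunctional_one]; positivity
  | one =>
    rw [← zero_add 1, factorialFunctional_C_sub_X_pow_succ, pow_zero, factorialFunctional_one,
      factorialFunctional_one, Nat.factorial_succ]
    push_cast at hq ⊢
    rw [← sub_mul]
    exact mul_nonneg (by linarith) (by positivity)
  | more k ih₀ ih₁ =>
    push_cast at hq
    rw [factorialFunctional_C_sub_X_pow_add_two]
    have h₁ := ih₁ c (by push_cast; linarith)
    have h₀ := ih₀ (c + 1) (by push_cast; linarith)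
    have hc : 0 ≤ q - (c + 1) := by linarith
    positivity

theorem g_eq_sum_powerset {k ℓ : ℕ} (hkl : k ≤ ℓ) (q : ℕ) :
    g k ℓ q = ∑ t ∈ (univ : Finset (Fin k)).powerset,
      (q : ℝ) ^ #t * (-1) ^ (k - #t) * (ℓ - #t).descFactorial (k - #t) := by
  rw [g]
  simpa only [Fintype.card_fin, Fin.ext_iff, Fin.castLEEmb_apply, Fin.val_castLE] using
    sum_injective_prod_mul_boole_sub_one (Fin.castLEEmb hkl) (q : ℝ)

theorem factorial_mul_g {k ℓ : ℕ} (hkl : k ≤ ℓ) (q : ℕ) :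
    ((ℓ - k)! : ℝ) * g k ℓ q = factorialFunctional (ℓ - k) ((C (q : ℝ) - X) ^ k) := by
  rw [g_eq_sum_powerset hkl, factorialFunctional_C_sub_X_pow_eq_sum, mul_sum]
  refine sum_congr rfl fun t _ => ?_
  have ht : #t ≤ k := by simpa using card_le_univ t
  have hfac := Nat.factorial_mul_descFactorial (show k - #t ≤ ℓ - #t by omega)
  rw [show ℓ - #t - (k - #t) = ℓ - k by omega] at hfac
  rw [show k - #t + (ℓ - k) = ℓ - #t by omega, ← hfac]
  push_cast
  ring

end ED

open ED in
/-- For all integers `0 ≤ k ≤ ℓ ≤ q`, `g(k,ℓ,q) ≥ 0`. -/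
theorem stmt2 (k ℓ q : ℕ) (hkl : k ≤ ℓ) (hlq : ℓ ≤ q) : 0 ≤ g k ℓ q := by
  refine nonneg_of_mul_nonneg_right ?_ (by positivity : (0 : ℝ) < (ℓ - k)!)
  rw [factorial_mul_g hkl]
  refine factorialFunctional_C_sub_X_pow_nonneg k (ℓ - k) ?_
  rw [Nat.cast_sub hkl, add_sub_cancel]
  exact_mod_cast hlq
end
end

section
/- For all integers 2 ≤ k ≤ ℓ ≤ q, the recurrence g(k,ℓ,q) = (q − ℓ + k − 1)·g(k−1, ℓ−1, q) + (k−1)(ℓ−k+1)·g(k−2, ℓ−1, q) holds. -/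
noncomputable section

namespace EDaux

open Finset

/-- The factor `q·[v = d] − 1`, with `d : Option (Fin a)` (`none` = no diagonal). -/
def ff (q : ℕ) {a : ℕ} (d : Option (Fin a)) (v : Fin a) : ℝ :=
  (q : ℝ) * (if some v = d then 1 else 0) - 1

/-- Injective tuples. -/
def InjS (m a : ℕ) : Finset (Fin m → Fin a) :=
  Finset.univ.filter (fun y => Function.Injective y)

def K (q m a : ℕ) (d : Fin m → Option (Fin a)) : ℝ :=
  ∑ y ∈ InjS m a, ∏ i, ff q (d i) (y i)

lemma ff_none (q : ℕ) {a : ℕ} (v : Fin a) : ff q none v = -1 := by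
  simp [ff]

lemma ff_map (q : ℕ) {a : ℕ} (d : Option (Fin a)) (e : Equiv.Perm (Fin a)) (v : Fin a) :
    ff q (d.map e) (e v) = ff q d v := by
  cases d with
  | none => simp [ff]
  | some w => simp [ff, Option.map_some]

lemma K_perm (q m a : ℕ) (d : Fin m → Option (Fin a)) (σ : Equiv.Perm (Fin m)) :
    K q m a (d ∘ σ) = K q m a d := by
  unfold K InjS
  refine Finset.sum_nbij' (fun y => y ∘ σ.symm) (fun y => y ∘ σ) ?_ ?_ ?_ ?_ ?_
  · intro y hy
    simp only [mem_filter, mem_univ, true_and] at hy ⊢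
    exact hy.comp σ.symm.injective
  · intro y hy
    simp only [mem_filter, mem_univ, true_and] at hy ⊢
    exact hy.comp σ.injective
  · intro y _; funext i; simp
  · intro y _; funext i; simp
  · intro y _
    calc ∏ i, ff q ((d ∘ σ) i) (y i)
        = ∏ i, ff q (d (σ i)) ((y ∘ σ.symm) (σ i)) := by
          refine Finset.prod_congr rfl fun i _ => ?_; simp
      _ = ∏ i, ff q (d i) ((y ∘ σ.symm) i) :=
          Equiv.prod_comp σ (fun i => ff q (d i) ((y ∘ σ.symm) i))

lemma K_value (q m a : ℕ) (d : Fin m → Option (Fin a)) (e : Equiv.Perm (Fin a)) :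
    K q m a (fun i => (d i).map e) = K q m a d := by
  unfold K InjS
  refine Finset.sum_nbij' (fun y => e.symm ∘ y) (fun y => e ∘ y) ?_ ?_ ?_ ?_ ?_
  · intro y hy
    simp only [mem_filter, mem_univ, true_and] at hy ⊢
    exact e.symm.injective.comp hy
  · intro y hy
    simp only [mem_filter, mem_univ, true_and] at hy ⊢
    exact e.injective.comp hy
  · intro y _; funext i; simp
  · intro y _; funext i; simp
  · intro y _
    refine Finset.prod_congr rfl fun i _ => ?_
    have := ff_map q (d i) e (e.symm (y i))
    simpa using this

lemma snoc_inj_iff {m a : ℕ} {z : Fin m → Fin a} {j : Fin a} :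
    Function.Injective (Fin.snoc z j) ↔ Function.Injective z ∧ ∀ i, z i ≠ j := by
  constructor
  · intro h
    constructor
    · intro i1 i2 e
      have : (Fin.snoc z j : Fin (m+1) → Fin a) i1.castSucc
          = (Fin.snoc z j : Fin (m+1) → Fin a) i2.castSucc := by
        simp only [Fin.snoc_castSucc]; exact e
      have := h this
      exact Fin.castSucc_injective _ this
    · intro i he
      have : (Fin.snoc z j : Fin (m+1) → Fin a) i.castSucc
          = (Fin.snoc z j : Fin (m+1) → Fin a) (Fin.last m) := by
        simp only [Fin.snoc_castSucc, Fin.snoc_last]; exact he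
      have := h this
      exact absurd this (Fin.castSucc_lt_last i).ne
  · rintro ⟨hz, hj⟩ i1 i2 e
    induction i1 using Fin.lastCases with
    | last =>
      induction i2 using Fin.lastCases with
      | last => rfl
      | cast i2 =>
        simp only [Fin.snoc_last, Fin.snoc_castSucc] at e
        exact absurd e.symm (hj i2)
    | cast i1 =>
      induction i2 using Fin.lastCases with
      | last =>
        simp only [Fin.snoc_last, Fin.snoc_castSucc] at e
        exact absurd e (hj i1)
      | cast i2 =>
        simp only [Fin.snoc_castSucc] at e
        exact congrArg Fin.castSucc (hz e)

lemma K_peel (q m a : ℕ) (d : Fin (m + 1) → Option (Fin a)) :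
    K q (m + 1) a d = ∑ j : Fin a, ff q (d (Fin.last m)) j *
      ∑ y ∈ (InjS m a).filter (fun y => ∀ i, y i ≠ j),
        ∏ i : Fin m, ff q (d i.castSucc) (y i) := by
  unfold K InjS
  have : ∀ j : Fin a, ff q (d (Fin.last m)) j *
      ∑ y ∈ ((Finset.univ.filter (fun y : Fin m → Fin a => Function.Injective y)).filter
        (fun y => ∀ i, y i ≠ j)), ∏ i : Fin m, ff q (d i.castSucc) (y i)
      = ∑ y ∈ ((Finset.univ.filter (fun y : Fin m → Fin a => Function.Injective y)).filter
        (fun y => ∀ i, y i ≠ j)),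
          ff q (d (Fin.last m)) j * ∏ i : Fin m, ff q (d i.castSucc) (y i) := fun j =>
    Finset.mul_sum _ _ _
  simp only [this]
  rw [Finset.sum_sigma']
  refine Finset.sum_nbij' (fun y => ⟨y (Fin.last m), y ∘ Fin.castSucc⟩)
    (fun p => Fin.snoc p.2 p.1) ?_ ?_ ?_ ?_ ?_
  · intro y hy
    simp only [mem_filter, mem_univ, true_and, Finset.mem_sigma] at hy ⊢
    exact ⟨hy.comp (Fin.castSucc_injective m),
      fun i he => absurd (hy he) (Fin.castSucc_lt_last i).ne⟩
  · intro p hp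
    simp only [mem_filter, mem_univ, true_and, Finset.mem_sigma] at hp ⊢
    exact snoc_inj_iff.2 hp
  · intro y _
    funext i
    induction i using Fin.lastCases with
    | last => simp
    | cast i => simp
  · rintro ⟨j, z⟩ _
    have h2 : Fin.snoc z j ∘ Fin.castSucc = z := funext fun i => by simp
    simp [h2]
  · intro y _
    rw [Fin.prod_univ_castSucc, mul_comm]
    rfl


/-- Restrict a diagonal target from `Fin (a+1)` to `Fin a` after deleting the last value. -/
def res {a : ℕ} (o : Option (Fin (a + 1))) : Option (Fin a) :=
  o.bind (fun v => if h : v = Fin.last a then none else some (v.castPred h))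

lemma ff_castSucc (q : ℕ) {a : ℕ} (d : Option (Fin (a + 1))) (v : Fin a) :
    ff q d v.castSucc = ff q (res d) v := by
  cases d with
  | none => simp [ff, res]
  | some w =>
    by_cases h : w = Fin.last a
    · subst h
      simp only [res, Option.bind, dif_pos]
      simp [ff, (Fin.castSucc_lt_last v).ne]
    · simp only [res, Option.bind, dif_neg h]
      simp only [ff, Option.some.injEq]
      congr 1
      have : (v.castSucc = w) ↔ (v = w.castPred h) := by
        rw [Fin.ext_iff, Fin.ext_iff]
        simp
      simp [this]

lemma avoid_last (q m a : ℕ) (d : Fin m → Option (Fin (a + 1))) :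
    ∑ y ∈ (InjS m (a + 1)).filter (fun y => ∀ i, y i ≠ Fin.last a),
        ∏ i, ff q (d i) (y i)
      = K q m a (fun i => res (d i)) := by
  unfold K InjS
  refine Finset.sum_bij' (fun y hy => fun i => (y i).castPred ?_)
    (fun z _ => fun i => (z i).castSucc) ?_ ?_ ?_ ?_ ?_
  · simp only [mem_filter] at hy
    exact hy.2 i
  · intro y hy
    simp only [mem_filter, mem_univ, true_and] at hy ⊢
    intro i1 i2 e
    exact hy.1 (by rwa [← Fin.castSucc_inj, Fin.castSucc_castPred, Fin.castSucc_castPred] at e)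
  · intro z hz
    simp only [mem_filter, mem_univ, true_and] at hz ⊢
    first
      | exact ⟨fun i1 i2 e => hz (Fin.castSucc_injective a e),
          fun i => (Fin.castSucc_lt_last (z i)).ne⟩
      | exact fun i1 i2 e => hz (Fin.castSucc_injective a e)
  · intro y hy
    funext i
    simp
  · intro z hz
    funext i
    simp
  · intro y hy
    refine Finset.prod_congr rfl fun i _ => ?_
    rw [← ff_castSucc]
    simp

lemma avoid_value (q m a : ℕ) (d : Fin m → Option (Fin a)) (e : Equiv.Perm (Fin a)) (j : Fin a) :
    ∑ y ∈ (InjS m a).filter (fun y => ∀ i, y i ≠ j), ∏ i, ff q (d i) (y i)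
      = ∑ y ∈ (InjS m a).filter (fun y => ∀ i, y i ≠ e j),
          ∏ i, ff q ((d i).map e) (y i) := by
  unfold InjS
  refine Finset.sum_nbij' (fun y => e ∘ y) (fun y => e.symm ∘ y) ?_ ?_ ?_ ?_ ?_
  · intro y hy
    simp only [mem_filter, mem_univ, true_and] at hy ⊢
    exact ⟨e.injective.comp hy.1, fun i he =>
      hy.2 i (e.injective (by simpa using he))⟩
  · intro y hy
    simp only [mem_filter, mem_univ, true_and] at hy ⊢
    refine ⟨e.symm.injective.comp hy.1, fun i he => hy.2 i ?_⟩
    have : y i = e j := by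
      have := congrArg e he
      simpa using this
    exact this
  · intro y _; funext i; simp
  · intro y _; funext i; simp
  · intro y _
    refine Finset.prod_congr rfl fun i _ => ?_
    exact (ff_map q (d i) e (y i)).symm

lemma card_avoid {m a : ℕ} (y : Fin m → Fin a) (hy : Function.Injective y) :
    (Finset.univ.filter (fun j : Fin a => ∀ i, y i ≠ j)).card = a - m := by
  have h1 : Finset.univ.filter (fun j : Fin a => ∀ i, y i ≠ j)
      = Finset.univ \ Finset.image y Finset.univ := by
    ext j
    simp [eq_comm]
  rw [h1, Finset.card_sdiff_of_subset (Finset.subset_univ _), Finset.card_image_of_injective _ hy]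
  simp

lemma K_free (q m a : ℕ) (hma : m ≤ a) (d : Fin (m + 1) → Option (Fin a))
    (hd : d (Fin.last m) = none) :
    K q (m + 1) a d = -(((a : ℝ) - m)) * K q m a (fun i => d i.castSucc) := by
  rw [K_peel]
  simp only [hd, ff_none]
  have swap : ∑ j : Fin a, (-1 : ℝ) *
      ∑ y ∈ (InjS m a).filter (fun y => ∀ i, y i ≠ j),
        ∏ i : Fin m, ff q (d i.castSucc) (y i)
      = -∑ j : Fin a, ∑ y ∈ InjS m a,
          (if ∀ i, y i ≠ j then ∏ i : Fin m, ff q (d i.castSucc) (y i) else 0) := by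
    rw [← Finset.sum_neg_distrib]
    refine Finset.sum_congr rfl fun j _ => ?_
    rw [neg_one_mul, Finset.sum_filter]
  rw [swap, Finset.sum_comm]
  unfold K InjS
  rw [Finset.mul_sum]
  rw [← Finset.sum_neg_distrib]
  refine Finset.sum_congr rfl fun y hy => ?_
  simp only [InjS, mem_filter, mem_univ, true_and] at hy
  rw [← Finset.sum_filter, Finset.sum_const, card_avoid y hy]
  have : ((a - m : ℕ) : ℝ) = (a : ℝ) - m := by
    push_cast [hma]
    ring
  rw [nsmul_eq_mul, this]
  ring

lemma inner_diag (q m b : ℕ) (hmb : m + 1 ≤ b) (j : Fin (b + 1)) (hj : m < (j : ℕ)) :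
    K q (m + 1) b (fun i : Fin (m + 1) =>
        res ((some (⟨(i : ℕ), lt_of_lt_of_le i.isLt (by omega)⟩ : Fin (b + 1))).map
          (Equiv.swap j (Fin.last b))))
      = K q (m + 1) b (fun i : Fin (m + 1) =>
          some (⟨(i : ℕ), lt_of_lt_of_le i.isLt hmb⟩ : Fin b)) := by
  congr 1
  funext i
  have hne1 : (⟨(i : ℕ), lt_of_lt_of_le i.isLt (by omega)⟩ : Fin (b + 1)) ≠ j := by
    intro h
    have := congrArg Fin.val h
    simp at this
    omega
  have hne2 : (⟨(i : ℕ), lt_of_lt_of_le i.isLt (by omega)⟩ : Fin (b + 1)) ≠ Fin.last b := by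
    intro h
    have := congrArg Fin.val h
    simp at this
    omega
  rw [Option.map_some, Equiv.swap_apply_of_ne_of_ne hne1 hne2]
  simp only [res, Option.bind_some, dif_neg hne2]
  rfl

def dHole (m b : ℕ) (hmb : m + 1 ≤ b) (jv : ℕ) : Fin (m + 1) → Option (Fin b) :=
  fun i => if (i : ℕ) = m then none
    else if (i : ℕ) = jv then some ⟨m, hmb⟩
    else some ⟨(i : ℕ), lt_of_lt_of_le i.isLt hmb⟩

lemma inner_hole (q m b : ℕ) (hmb : m + 1 ≤ b) (j : Fin (b + 1)) (hj : (j : ℕ) ≤ m) :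
    K q (m + 1) b (fun i : Fin (m + 1) =>
        res ((some (⟨(i : ℕ), lt_of_lt_of_le i.isLt (by omega)⟩ : Fin (b + 1))).map
          (Equiv.swap j (Fin.last b))))
      = -(((b : ℝ) - m)) *
        K q m b (fun i : Fin m =>
          some (⟨(i : ℕ), lt_of_lt_of_le i.isLt (Nat.le_of_succ_le hmb)⟩ : Fin b)) := by
  have hjb : (j : ℕ) < b := by omega
  have hmbb : m < b := by omega
  set σ : Equiv.Perm (Fin (m + 1)) :=
    Equiv.swap (⟨(j : ℕ), by omega⟩ : Fin (m + 1)) (Fin.last m) with hσdef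
  have hσ : (fun i : Fin (m + 1) =>
        res ((some (⟨(i : ℕ), lt_of_lt_of_le i.isLt (by omega)⟩ : Fin (b + 1))).map
          (Equiv.swap j (Fin.last b))))
      = (dHole m b hmb (j : ℕ)) ∘ σ := by
    funext i
    simp only [Function.comp_apply, hσdef, Equiv.swap_apply_def, Option.map_some]
    by_cases h1 : (i : ℕ) = (j : ℕ)
    · -- i = j position: value ⟨i⟩ = j, swap sends it to last b, res gives none
      have hv : (⟨(i : ℕ), lt_of_lt_of_le i.isLt (by omega)⟩ : Fin (b + 1)) = j :=
        Fin.ext (by simpa using h1)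
      have hi : i = (⟨(j : ℕ), by omega⟩ : Fin (m + 1)) := Fin.ext (by simpa using h1)
      rw [if_pos hv, if_pos hi]
      simp [res, dHole]
    · have hv1 : (⟨(i : ℕ), lt_of_lt_of_le i.isLt (by omega)⟩ : Fin (b + 1)) ≠ j := by
        intro h; exact h1 (by simpa using congrArg Fin.val h)
      have hi1 : i ≠ (⟨(j : ℕ), by omega⟩ : Fin (m + 1)) := by
        intro h; exact h1 (by simpa using congrArg Fin.val h)
      rw [if_neg hv1, if_neg hi1]
      by_cases h2 : (i : ℕ) = m
      · have hv2 : (⟨(i : ℕ), lt_of_lt_of_le i.isLt (by omega)⟩ : Fin (b + 1)) ≠ Fin.last b := by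
          intro h
          have := congrArg Fin.val h
          simp at this
          omega
        have hi2 : i = Fin.last m := Fin.ext (by simpa using h2)
        rw [if_neg hv2, if_pos hi2]
        simp only [res, Option.bind_some, dif_neg hv2, dHole]
        have hjm : ¬ (((⟨(j : ℕ), by omega⟩ : Fin (m + 1)) : ℕ) = m) := by
          simp only [Fin.val_mk]
          omega
        rw [if_neg hjm, if_pos (by simp)]
        exact congrArg some (Fin.ext (by simp [h2]))
      · have hv2 : (⟨(i : ℕ), lt_of_lt_of_le i.isLt (by omega)⟩ : Fin (b + 1)) ≠ Fin.last b := by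
          intro h
          have := congrArg Fin.val h
          simp at this
          omega
        have hi2 : i ≠ Fin.last m := by
          intro h; exact h2 (by simpa using congrArg Fin.val h)
        rw [if_neg hv2, if_neg hi2]
        simp only [res, Option.bind_some, dif_neg hv2, dHole]
        rw [if_neg h2, if_neg h1]
        rfl
  rw [hσ, K_perm]
  rw [K_free q m b (by omega) _ (by simp [dHole])]
  congr 1
  have hc : (fun i : Fin m => dHole m b hmb (j : ℕ) i.castSucc)
      = fun i : Fin m =>
          (some (⟨(i : ℕ), lt_of_lt_of_le i.isLt (Nat.le_of_succ_le hmb)⟩ : Fin b)).map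
            (Equiv.swap (⟨(j : ℕ), hjb⟩ : Fin b) (⟨m, hmbb⟩ : Fin b)) := by
    funext i
    simp only [dHole, Fin.coe_castSucc, Option.map_some, Equiv.swap_apply_def]
    have him : (i : ℕ) ≠ m := by omega
    rw [if_neg him]
    by_cases h1 : (i : ℕ) = (j : ℕ)
    · rw [if_pos h1, if_pos (Fin.ext (by simpa using h1))]
    · rw [if_neg h1, if_neg (fun h => h1 (by simpa using congrArg Fin.val h)),
        if_neg (fun h => him (by simpa using congrArg Fin.val h))]
  rw [show (fun i : Fin m => dHole m b hmb (j : ℕ) i.castSucc)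
      = _ from hc, K_value]

lemma g_eq_K (q k l : ℕ) (h : k ≤ l) :
    ED.g k l q = K q k l (fun i => some ⟨(i : ℕ), lt_of_lt_of_le i.isLt h⟩) := by
  unfold ED.g K InjS
  refine Finset.sum_congr rfl fun y _ => Finset.prod_congr rfl fun i _ => ?_
  simp [ff, Fin.ext_iff]
end EDaux

open ED in
/-- The recurrence `g(k,ℓ,q) = (q−ℓ+k−1)·g(k−1,ℓ−1,q) + (k−1)(ℓ−k+1)·g(k−2,ℓ−1,q)`
for `2 ≤ k ≤ ℓ ≤ q`. -/
theorem stmt3 (k ℓ q : ℕ) (hk : 2 ≤ k) (hkl : k ≤ ℓ) (hlq : ℓ ≤ q) :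
    g k ℓ q = ((q : ℝ) - ℓ + k - 1) * g (k - 1) (ℓ - 1) q
      + ((k : ℝ) - 1) * ((ℓ : ℝ) - k + 1) * g (k - 2) (ℓ - 1) q := by
  obtain ⟨m, rfl⟩ : ∃ m, k = m + 2 := ⟨k - 2, by omega⟩
  obtain ⟨b, rfl⟩ : ∃ b, ℓ = b + 1 := ⟨ℓ - 1, by omega⟩
  have hmb : m + 1 ≤ b := by omega
  have hm2 : m + 2 ≤ b + 1 := by omega
  have e1 : m + 2 - 1 = m + 1 := rfl
  have e2 : m + 2 - 2 = m := rfl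
  have e3 : b + 1 - 1 = b := rfl
  rw [e1, e2, e3]
  rw [EDaux.g_eq_K q (m + 2) (b + 1) hm2, EDaux.K_peel]
  have key : ∀ j : Fin (b + 1),
      (∑ y ∈ (EDaux.InjS (m + 1) (b + 1)).filter (fun y => ∀ i, y i ≠ j),
        ∏ i, EDaux.ff q
          ((fun i : Fin (m + 2) =>
            some (⟨(i : ℕ), lt_of_lt_of_le i.isLt hm2⟩ : Fin (b + 1))) i.castSucc) (y i))
      = if (j : ℕ) ≤ m then -(((b : ℝ) - m)) * g m b q else g (m + 1) b q := by
    intro j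
    rw [EDaux.avoid_value q (m + 1) (b + 1) _ (Equiv.swap j (Fin.last b)) j,
      Equiv.swap_apply_left, EDaux.avoid_last]
    have hfun : (fun i : Fin (m + 1) =>
          EDaux.res (((fun i : Fin (m + 2) =>
            some (⟨(i : ℕ), lt_of_lt_of_le i.isLt hm2⟩ : Fin (b + 1))) i.castSucc).map
            (Equiv.swap j (Fin.last b))))
        = fun i : Fin (m + 1) =>
            EDaux.res ((some (⟨(i : ℕ), lt_of_lt_of_le i.isLt (by omega)⟩ : Fin (b + 1))).map
              (Equiv.swap j (Fin.last b))) := rfl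
    rw [hfun]
    by_cases hj : (j : ℕ) ≤ m
    · rw [if_pos hj, EDaux.inner_hole q m b hmb j hj]
      congr 1
      rw [EDaux.g_eq_K q m b (Nat.le_of_succ_le hmb)]
    · rw [if_neg hj, EDaux.inner_diag q m b hmb j (by omega),
        EDaux.g_eq_K q (m + 1) b hmb]
  rw [Finset.sum_congr rfl (fun j _ => by rw [key j])]
  have hff : ∀ j : Fin (b + 1),
      EDaux.ff q ((fun i : Fin (m + 2) =>
          some (⟨(i : ℕ), lt_of_lt_of_le i.isLt hm2⟩ : Fin (b + 1))) (Fin.last (m + 1))) j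
        = if (j : ℕ) = m + 1 then (q : ℝ) - 1 else -1 := by
    intro j
    have : (some j = some (⟨((Fin.last (m + 1) : Fin (m+2)) : ℕ),
        lt_of_lt_of_le (Fin.last (m+1)).isLt hm2⟩ : Fin (b + 1))) ↔ ((j : ℕ) = m + 1) := by
      simp [Fin.ext_iff]
    simp only [EDaux.ff]
    by_cases h : (j : ℕ) = m + 1
    · rw [if_pos (this.mpr h), if_pos h]; ring
    · rw [if_neg (fun hh => h (this.mp hh)), if_neg h]; ring
  rw [Finset.sum_congr rfl (fun j _ => by rw [hff j])]
  set G1 := g (m + 1) b q with hG1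
  set G2 := g m b q with hG2
  have hr : ∑ j : Fin (b + 1),
      (if (j : ℕ) = m + 1 then (q : ℝ) - 1 else -1) *
        (if (j : ℕ) ≤ m then -(((b : ℝ) - m)) * G2 else G1)
      = ∑ n ∈ Finset.range (b + 1),
          (if n = m + 1 then (q : ℝ) - 1 else -1) *
            (if n ≤ m then -(((b : ℝ) - m)) * G2 else G1) :=
    Fin.sum_univ_eq_sum_range
      (fun n => (if n = m + 1 then (q : ℝ) - 1 else -1) *
        (if n ≤ m then -(((b : ℝ) - m)) * G2 else G1)) (b + 1)
  rw [hr, Finset.range_eq_Ico,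
    ← Finset.sum_Ico_consecutive _ (Nat.zero_le (m + 2)) hm2,
    ← Finset.range_eq_Ico, Finset.sum_range_succ]
  have hA : ∑ n ∈ Finset.range (m + 1),
      (if n = m + 1 then (q : ℝ) - 1 else -1) *
        (if n ≤ m then -(((b : ℝ) - m)) * G2 else G1)
      = ((m : ℝ) + 1) * (((b : ℝ) - m) * G2) := by
    have hterm : ∀ n ∈ Finset.range (m + 1),
        (if n = m + 1 then (q : ℝ) - 1 else -1) *
          (if n ≤ m then -(((b : ℝ) - m)) * G2 else G1) = ((b : ℝ) - m) * G2 := by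
      intro n hn
      have hn' : n < m + 1 := Finset.mem_range.mp hn
      rw [if_neg (by omega), if_pos (by omega)]
      ring
    rw [Finset.sum_congr rfl hterm, Finset.sum_const, Finset.card_range, nsmul_eq_mul]
    push_cast; ring
  have hB : ∑ n ∈ Finset.Ico (m + 2) (b + 1),
      (if n = m + 1 then (q : ℝ) - 1 else -1) *
        (if n ≤ m then -(((b : ℝ) - m)) * G2 else G1)
      = -(((b : ℝ) - m - 1) * G1) := by
    have hterm : ∀ n ∈ Finset.Ico (m + 2) (b + 1),
        (if n = m + 1 then (q : ℝ) - 1 else -1) *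
          (if n ≤ m then -(((b : ℝ) - m)) * G2 else G1) = -G1 := by
      intro n hn
      have hn' : m + 2 ≤ n := (Finset.mem_Ico.mp hn).1
      rw [if_neg (by omega), if_neg (by omega)]
      ring
    rw [Finset.sum_congr rfl hterm, Finset.sum_const, Nat.card_Ico, nsmul_eq_mul]
    have hc : ((b + 1 - (m + 2) : ℕ) : ℝ) = (b : ℝ) - m - 1 := by
      rw [Nat.cast_sub (by omega)]
      push_cast; ring
    rw [hc]; ring
  rw [hA, hB, if_pos rfl, if_neg (by omega)]
  push_cast
  ring
end
end

section
/- Let n ≥ 2, q ≥ 1 and 0 ≤ k ≤ n−2. Let G = F′ ⊗ E_k^{(n−2)}. Then Σ_{b=2}^{n} (G_{1,b})ᵀ G_{1,b} = (k+1) · E₀ ⊗ E_{k+1}^{(n−1)}. -/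
noncomputable section

namespace ED

/-- The tensor product `A ⊗ E_k^{(n-2)}` of a `q × q²` matrix `A` with `E_k^{(n-2)}`:
a `q^{n-1} × q^n` matrix with rows indexed by `[q] × [q]^{n-2}` and columns by
`([q] × [q]) × [q]^{n-2}`. -/
def tens (n q : ℕ) (A : Matrix (Fin q) (Fin q × Fin q) ℝ) (k : ℕ) :
    Matrix (Fin q × (Fin (n - 2) → Fin q)) ((Fin q × Fin q) × (Fin (n - 2) → Fin q)) ℝ :=
  Matrix.of fun r c => A r.1 c.1 * Ek q (n - 2) k r.2 c.2

end ED

namespace ED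

/-- The `q × q²` matrix `F′` with `(x,(y₁,y₂))` entry `q^{−1/2}(E₁)_{x,y₂}`. -/
noncomputable def F' (q : ℕ) : Matrix (Fin q) (Fin q × Fin q) ℝ :=
  Matrix.of fun x y => (Real.sqrt q)⁻¹ * E1 q x y.2

end ED


namespace ED
open Matrix

variable {q : ℕ}



lemma cast_mul_one_div_one_div (hq : 1 ≤ q) : (q:ℝ) * (1/q * (1/q)) = 1/q := by
  have hq0 : (q : ℝ) ≠ 0 := Nat.cast_ne_zero.mpr (by omega)
  field_simp

lemma sum_E1_E1 (hq : 1 ≤ q) (a b : Fin q) :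
    ∑ t : Fin q, E1 q t a * E1 q t b = E1 q a b := by
  have expand : ∀ t : Fin q, E1 q t a * E1 q t b =
      ((if t = a then (1:ℝ) else 0) * (if t = b then 1 else 0)
        - (if t = a then (1:ℝ) else 0) * (1/q)) - (1/q) * (if t = b then (1:ℝ) else 0)
        + (1/q) * (1/q) := by
    intro t; simp only [E1, Matrix.of_apply]; ring
  simp only [expand]
  rw [Finset.sum_add_distrib, Finset.sum_sub_distrib, Finset.sum_sub_distrib]
  simp only [ite_mul, one_mul, zero_mul, mul_ite, mul_one, mul_zero,
    Finset.sum_ite_eq', Finset.mem_univ, if_true,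
    Finset.sum_const, Finset.card_univ, Fintype.card_fin, nsmul_eq_mul]
  rw [cast_mul_one_div_one_div hq]
  simp only [E1, Matrix.of_apply]
  by_cases h : b = a
  · subst h
    simp only [if_pos rfl]
    ring
  · have h' : ¬ b = a := fun hh => h hh
    have h'' : ¬ a = b := fun hh => h hh.symm
    simp only [if_neg h', if_neg h'']
    ring

lemma sum_E1_E0 (hq : 1 ≤ q) (a b : Fin q) :
    ∑ t : Fin q, E1 q t a * E0 q t b = 0 := by
  have expand : ∀ t : Fin q, E1 q t a * E0 q t b =
      (if t = a then (1:ℝ) else 0) * (1/q) - (1/q) * (1/q) := by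
    intro t; simp only [E1, E0, Matrix.of_apply]; ring
  simp only [expand]
  rw [Finset.sum_sub_distrib]
  simp only [ite_mul, one_mul, zero_mul, Finset.sum_ite_eq', Finset.mem_univ, if_true,
    Finset.sum_const, Finset.card_univ, Fintype.card_fin, nsmul_eq_mul]
  rw [cast_mul_one_div_one_div hq, sub_self]

lemma sum_E0_E1 (hq : 1 ≤ q) (a b : Fin q) :
    ∑ t : Fin q, E0 q t a * E1 q t b = 0 := by
  have expand : ∀ t : Fin q, E0 q t a * E1 q t b = E1 q t b * E0 q t a := fun t => mul_comm _ _
  simp only [expand]; exact sum_E1_E0 hq b a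

lemma sum_E0_E0 (hq : 1 ≤ q) (a b : Fin q) :
    ∑ t : Fin q, E0 q t a * E0 q t b = E0 q a b := by
  simp only [E0, Matrix.of_apply, Finset.sum_const, Finset.card_univ, Fintype.card_fin,
    nsmul_eq_mul]
  exact cast_mul_one_div_one_div hq

lemma sum_Ek_Ek (hq : 1 ≤ q) (m k : ℕ) (a b : Fin m → Fin q) :
    ∑ z : Fin m → Fin q, Ek q m k z a * Ek q m k z b = Ek q m k a b := by
  simp only [Ek, Matrix.of_apply]
  have step1 : ∀ z : Fin m → Fin q,
      (∑ S ∈ Finset.powersetCard k (Finset.univ : Finset (Fin m)),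
          ∏ i, (if i ∈ S then E1 q (z i) (a i) else E0 q (z i) (a i))) *
      (∑ S' ∈ Finset.powersetCard k (Finset.univ : Finset (Fin m)),
          ∏ i, (if i ∈ S' then E1 q (z i) (b i) else E0 q (z i) (b i)))
      = ∑ S ∈ Finset.powersetCard k (Finset.univ : Finset (Fin m)),
          ∑ S' ∈ Finset.powersetCard k (Finset.univ : Finset (Fin m)),
          ∏ i, ((if i ∈ S then E1 q (z i) (a i) else E0 q (z i) (a i)) *
                (if i ∈ S' then E1 q (z i) (b i) else E0 q (z i) (b i))) := by
    intro z
    rw [Finset.sum_mul_sum]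
    exact Finset.sum_congr rfl fun S _ => Finset.sum_congr rfl fun S' _ =>
      (Finset.prod_mul_distrib).symm
  simp only [step1]
  rw [Finset.sum_comm]
  refine Finset.sum_congr rfl fun S hS => ?_
  rw [Finset.sum_comm]
  have step2 : ∀ S' : Finset (Fin m),
      (∑ z : Fin m → Fin q, ∏ i, ((if i ∈ S then E1 q (z i) (a i) else E0 q (z i) (a i)) *
          (if i ∈ S' then E1 q (z i) (b i) else E0 q (z i) (b i))))
      = ∏ i, ∑ t : Fin q, ((if i ∈ S then E1 q t (a i) else E0 q t (a i)) *
          (if i ∈ S' then E1 q t (b i) else E0 q t (b i))) := by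
    intro S'
    rw [Finset.prod_univ_sum]
    rw [← Fintype.piFinset_univ]
  simp only [step2]
  rw [Finset.sum_eq_single_of_mem S hS]
  · refine Finset.prod_congr rfl fun i _ => ?_
    by_cases hi : i ∈ S
    · simp only [hi, if_true]; exact sum_E1_E1 hq _ _
    · simp only [hi, if_false]; exact sum_E0_E0 hq _ _
  · intro S' hS' hne
    have hex : ∃ i, ¬ (i ∈ S' ↔ i ∈ S) := by
      by_contra hcon
      push_neg at hcon
      exact hne (Finset.ext fun i => (hcon i))
    obtain ⟨i, hi⟩ := hex
    apply Finset.prod_eq_zero (Finset.mem_univ i)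
    by_cases h1 : i ∈ S <;> by_cases h2 : i ∈ S'
    · exact absurd (iff_of_true h2 h1) hi
    · simp only [h1, h2, if_true, if_false]; exact sum_E1_E0 hq _ _
    · simp only [h1, h2, if_true, if_false]; exact sum_E0_E1 hq _ _
    · exact absurd (iff_of_false h2 h1) hi

lemma sum_powersetCard_reindex {ι : Type*} [DecidableEq ι] {m : ℕ} (C : Finset ι)
    (e : Fin m → ι) (he : Function.Injective e) (hmem : ∀ i, e i ∈ C)
    (hcard : C.card = m) (k : ℕ) (A B : ι → ℝ) :
    ∑ S ∈ Finset.powersetCard k (Finset.univ : Finset (Fin m)),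
        ∏ i, (if i ∈ S then A (e i) else B (e i))
      = ∑ T ∈ Finset.powersetCard k C, ∏ j ∈ C, (if j ∈ T then A j else B j) := by
  set f : Fin m ↪ ι := ⟨e, he⟩ with hf
  have himg : (Finset.univ : Finset (Fin m)).map f = C := by
    apply Finset.eq_of_subset_of_card_le
    · intro j hj
      obtain ⟨i, _, rfl⟩ := Finset.mem_map.mp hj
      exact hmem i
    · rw [Finset.card_map, Finset.card_univ, Fintype.card_fin, hcard]
  have hfilt : ∀ T ∈ Finset.powersetCard k C,
      (Finset.univ.filter fun i => e i ∈ T).map f = T := by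
    intro T hT
    have hTC := (Finset.mem_powersetCard.mp hT).1
    ext j
    simp only [Finset.mem_map, Finset.mem_filter, Finset.mem_univ, true_and]
    constructor
    · rintro ⟨i, hi, rfl⟩; exact hi
    · intro hj
      have hjC : j ∈ (Finset.univ : Finset (Fin m)).map f := by rw [himg]; exact hTC hj
      obtain ⟨i, _, rfl⟩ := Finset.mem_map.mp hjC
      exact ⟨i, hj, rfl⟩
  refine Finset.sum_nbij' (fun S => S.map f)
    (fun T => Finset.univ.filter fun i => e i ∈ T) ?_ ?_ ?_ ?_ ?_
  · intro S hS
    rw [Finset.mem_powersetCard] at hS ⊢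
    exact ⟨himg ▸ Finset.map_subset_map.mpr hS.1, (Finset.card_map f).trans hS.2⟩
  · intro T hT
    rw [Finset.mem_powersetCard]
    have hc := congrArg Finset.card (hfilt T hT)
    rw [Finset.card_map] at hc
    exact ⟨Finset.subset_univ _, hc.trans (Finset.mem_powersetCard.mp hT).2⟩
  · intro S _
    ext i
    simp only [Finset.mem_filter, Finset.mem_univ, true_and]
    exact Finset.mem_map' f
  · exact hfilt
  · intro S _
    rw [← himg, Finset.prod_map]
    refine Finset.prod_congr rfl fun i _ => ?_
    have hiff : f i ∈ S.map f ↔ i ∈ S := Finset.mem_map' f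
    by_cases hi : i ∈ S
    · rw [if_pos hi, if_pos (hiff.mpr hi)]; rfl
    · rw [if_neg hi, if_neg (fun hc => hi (hiff.mp hc))]; rfl

lemma sum_insert_swap {ι : Type*} [DecidableEq ι] [Fintype ι] (z0 : ι) (k : ℕ)
    (g : Finset ι → ℝ) :
    ∑ b ∈ ({z0}ᶜ : Finset ι), ∑ S ∈ Finset.powersetCard k ({z0, b}ᶜ : Finset ι), g (insert b S)
      = ∑ T ∈ Finset.powersetCard (k+1) ({z0}ᶜ : Finset ι), ((k:ℝ)+1) * g T := by
  have hconst : ∀ T ∈ Finset.powersetCard (k+1) ({z0}ᶜ : Finset ι),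
      ((k:ℝ)+1) * g T = ∑ _b ∈ T, g T := by
    intro T hT
    rw [Finset.sum_const, (Finset.mem_powersetCard.mp hT).2, nsmul_eq_mul]
    push_cast
    ring
  rw [Finset.sum_congr rfl hconst, Finset.sum_sigma', Finset.sum_sigma']
  refine Finset.sum_nbij' (fun p => ⟨insert p.1 p.2, p.1⟩) (fun p => ⟨p.2, p.1.erase p.2⟩)
    ?_ ?_ ?_ ?_ ?_
  · rintro ⟨b, S⟩ hp
    rw [Finset.mem_sigma] at hp
    obtain ⟨hb, hS⟩ := hp
    rw [Finset.mem_powersetCard] at hS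
    rw [Finset.mem_compl, Finset.mem_singleton] at hb
    have hbS : b ∉ S := fun hc => by
      have := hS.1 hc
      rw [Finset.mem_compl] at this
      exact this (Finset.mem_insert_of_mem (Finset.mem_singleton_self b))
    rw [Finset.mem_sigma, Finset.mem_powersetCard]
    refine ⟨⟨?_, ?_⟩, Finset.mem_insert_self _ _⟩
    · intro j hj
      rw [Finset.mem_compl, Finset.mem_singleton]
      rcases Finset.mem_insert.mp hj with rfl | hjS
      · exact hb
      · have := hS.1 hjS
        rw [Finset.mem_compl] at this
        exact fun hc => this (hc ▸ Finset.mem_insert_self _ _)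
    · rw [Finset.card_insert_of_notMem hbS, hS.2]
  · rintro ⟨T, b⟩ hp
    rw [Finset.mem_sigma] at hp
    obtain ⟨hT, hb⟩ := hp
    rw [Finset.mem_powersetCard] at hT
    rw [Finset.mem_sigma, Finset.mem_powersetCard]
    refine ⟨hT.1 hb, ?_, ?_⟩
    · intro j hj
      rw [Finset.mem_erase] at hj
      have hjz : j ∈ ({z0}ᶜ : Finset ι) := hT.1 hj.2
      rw [Finset.mem_compl, Finset.mem_singleton] at hjz
      rw [Finset.mem_compl]
      intro hc
      rcases Finset.mem_insert.mp hc with rfl | hc'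
      · exact hjz rfl
      · exact hj.1 (Finset.mem_singleton.mp hc')
    · rw [Finset.card_erase_of_mem hb, hT.2]
      omega
  · rintro ⟨b, S⟩ hp
    rw [Finset.mem_sigma] at hp
    obtain ⟨hb, hS⟩ := hp
    rw [Finset.mem_powersetCard] at hS
    have hbS : b ∉ S := fun hc => by
      have := hS.1 hc
      rw [Finset.mem_compl] at this
      exact this (Finset.mem_insert_of_mem (Finset.mem_singleton_self b))
    simp only [Finset.erase_insert hbS]
  · rintro ⟨T, b⟩ hp
    rw [Finset.mem_sigma] at hp
    simp only [Finset.insert_erase hp.2]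
  · rintro ⟨b, S⟩ _
    rfl

lemma card_compl_pair {n : ℕ} (a b : Fin n) (h : a ≠ b) :
    ({a, b}ᶜ : Finset (Fin n)).card = n - 2 := by
  rw [Finset.card_compl, Finset.card_pair h, Fintype.card_fin]

lemma embCompl_mem {n : ℕ} (a b : Fin n) (h : a ≠ b) (i : Fin (n - 2)) :
    embCompl a b h i ∈ ({a, b}ᶜ : Finset (Fin n)) :=
  (({a, b}ᶜ : Finset (Fin n)).orderIsoOfFin (card_compl_pair a b h) i).2

lemma embCompl_injective {n : ℕ} (a b : Fin n) (h : a ≠ b) :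
    Function.Injective (embCompl a b h) := fun i j hij =>
  (({a, b}ᶜ : Finset (Fin n)).orderIsoOfFin (card_compl_pair a b h)).injective
    (Subtype.ext hij)

lemma embCompl_symm {n : ℕ} (a b : Fin n) (h : a ≠ b) (j : Fin n)
    (hj : j ∈ ({a, b}ᶜ : Finset (Fin n))) :
    embCompl a b h
      ((({a, b}ᶜ : Finset (Fin n)).orderIsoOfFin (card_compl_pair a b h)).symm ⟨j, hj⟩) = j := by
  show ((({a, b}ᶜ : Finset (Fin n)).orderIsoOfFin (card_compl_pair a b h))
      ((({a, b}ᶜ : Finset (Fin n)).orderIsoOfFin (card_compl_pair a b h)).symm ⟨j, hj⟩) : Fin n) = j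
  rw [OrderIso.apply_symm_apply]

def recon {n q : ℕ} (a b : Fin n) (h : a ≠ b) (t : Fin q) (z : Fin (n - 2) → Fin q) :
    Fin n → Fin q :=
  fun j => if hj : j ∈ ({a, b}ᶜ : Finset (Fin n)) then
    z ((({a, b}ᶜ : Finset (Fin n)).orderIsoOfFin (card_compl_pair a b h)).symm ⟨j, hj⟩) else t

lemma recon_a {n q : ℕ} (a b : Fin n) (h : a ≠ b) (t : Fin q) (z : Fin (n - 2) → Fin q) :
    recon a b h t z a = t := by
  have : a ∉ ({a, b}ᶜ : Finset (Fin n)) := by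
    simp [Finset.mem_compl]
  rw [recon, dif_neg this]

lemma recon_b {n q : ℕ} (a b : Fin n) (h : a ≠ b) (t : Fin q) (z : Fin (n - 2) → Fin q) :
    recon a b h t z b = t := by
  have : b ∉ ({a, b}ᶜ : Finset (Fin n)) := by
    simp [Finset.mem_compl]
  rw [recon, dif_neg this]

lemma recon_emb {n q : ℕ} (a b : Fin n) (h : a ≠ b) (t : Fin q) (z : Fin (n - 2) → Fin q)
    (i : Fin (n - 2)) : recon a b h t z (embCompl a b h i) = z i := by
  rw [recon, dif_pos (embCompl_mem a b h i)]
  congr 1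
  have : (⟨embCompl a b h i, embCompl_mem a b h i⟩ : {x // x ∈ ({a, b}ᶜ : Finset (Fin n))})
      = (({a, b}ᶜ : Finset (Fin n)).orderIsoOfFin (card_compl_pair a b h)) i := rfl
  rw [this, OrderIso.symm_apply_apply]

lemma recon_eq {n q : ℕ} (a b : Fin n) (h : a ≠ b) (x : Fin n → Fin q) (hx : x a = x b) :
    recon a b h (x a) (fun i => x (embCompl a b h i)) = x := by
  funext j
  by_cases hj : j ∈ ({a, b}ᶜ : Finset (Fin n))
  · rw [recon, dif_pos hj]
    exact congrArg x (embCompl_symm a b h j hj)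
  · rw [recon, dif_neg hj]
    rw [Finset.mem_compl, not_not, Finset.mem_insert, Finset.mem_singleton] at hj
    rcases hj with rfl | rfl
    · rfl
    · exact hx

lemma sum_split {n q : ℕ} (a b : Fin n) (h : a ≠ b) (f : Fin q → (Fin (n - 2) → Fin q) → ℝ) :
    ∑ x : {x : Fin n → Fin q // x a = x b}, f (x.1 a) (fun i => x.1 (embCompl a b h i))
      = ∑ t : Fin q, ∑ z : Fin (n - 2) → Fin q, f t z := by
  rw [← Fintype.sum_prod_type']
  refine Fintype.sum_bijective (fun x => (x.1 a, fun i => x.1 (embCompl a b h i))) ?_ _ _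
    (fun x => rfl)
  constructor
  · rintro ⟨x, hx⟩ ⟨x', hx'⟩ hxy
    simp only [Prod.mk.injEq] at hxy
    have := recon_eq a b h x hx
    rw [hxy.1, hxy.2, recon_eq a b h x' hx'] at this
    exact Subtype.ext this.symm
  · rintro ⟨t, z⟩
    refine ⟨⟨recon a b h t z, by rw [recon_a, recon_b]⟩, ?_⟩
    simp only [Prod.mk.injEq]
    exact ⟨recon_a a b h t z, funext fun i => recon_emb a b h t z i⟩

lemma entry_eq (n q k : ℕ) (hq : 1 ≤ q) (a b : Fin n) (h : a ≠ b) (y y' : Fin n → Fin q) :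
    ((subMat (tens n q (F' q) k) a b h)ᵀ * subMat (tens n q (F' q) k) a b h) y y'
      = 1 / (q : ℝ) * E1 q (y b) (y' b) *
          Ek q (n - 2) k (fun i => y (embCompl a b h i)) (fun i => y' (embCompl a b h i)) := by
  have hsq : (Real.sqrt q)⁻¹ * (Real.sqrt q)⁻¹ = 1 / (q : ℝ) := by
    rw [← mul_inv, Real.mul_self_sqrt (Nat.cast_nonneg q), one_div]
  have expand : ∀ x : {x : Fin n → Fin q // x a = x b},
      (subMat (tens n q (F' q) k) a b h)ᵀ y x * subMat (tens n q (F' q) k) a b h x y'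
      = ((Real.sqrt q)⁻¹ * E1 q (x.1 a) (y b) *
          Ek q (n - 2) k (fun i => x.1 (embCompl a b h i)) (fun i => y (embCompl a b h i))) *
        ((Real.sqrt q)⁻¹ * E1 q (x.1 a) (y' b) *
          Ek q (n - 2) k (fun i => x.1 (embCompl a b h i)) (fun i => y' (embCompl a b h i))) := by
    intro x
    rfl
  rw [Matrix.mul_apply]
  simp only [expand]
  rw [sum_split a b h (fun t z =>
    ((Real.sqrt q)⁻¹ * E1 q t (y b) * Ek q (n - 2) k z (fun i => y (embCompl a b h i))) *
    ((Real.sqrt q)⁻¹ * E1 q t (y' b) * Ek q (n - 2) k z (fun i => y' (embCompl a b h i))))]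
  have inner : ∀ t : Fin q,
      ∑ z : Fin (n - 2) → Fin q,
        ((Real.sqrt q)⁻¹ * E1 q t (y b) * Ek q (n - 2) k z (fun i => y (embCompl a b h i))) *
        ((Real.sqrt q)⁻¹ * E1 q t (y' b) * Ek q (n - 2) k z (fun i => y' (embCompl a b h i)))
      = (1 / (q : ℝ)) * (E1 q t (y b) * E1 q t (y' b)) *
          Ek q (n - 2) k (fun i => y (embCompl a b h i)) (fun i => y' (embCompl a b h i)) := by
    intro t
    rw [← sum_Ek_Ek hq (n - 2) k (fun i => y (embCompl a b h i)) (fun i => y' (embCompl a b h i)),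
      Finset.mul_sum]
    refine Finset.sum_congr rfl fun z _ => ?_
    rw [← hsq]
    ring
  simp only [inner]
  rw [← Finset.sum_mul, ← Finset.mul_sum, sum_E1_E1 hq (y b) (y' b)]

end ED

open Matrix ED in
/-- For `G = F′ ⊗ E_k^{(n−2)}`, one has
`Σ_{b=2}^{n} (G_{1,b})ᵀ G_{1,b} = (k+1) · E₀ ⊗ E_{k+1}^{(n−1)}`,
where the factor `E₀` acts on the first coordinate. -/
theorem stmt7 (n q k : ℕ) (hn : 2 ≤ n) (hq : 1 ≤ q) (hk : k ≤ n - 2) :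
    (∑ b : Fin n,
        if h : (⟨0, Nat.lt_of_lt_of_le Nat.zero_lt_two hn⟩ : Fin n) < b then
          (subMat (tens n q (F' q) k) ⟨0, Nat.lt_of_lt_of_le Nat.zero_lt_two hn⟩ b h.ne)ᵀ *
            subMat (tens n q (F' q) k) ⟨0, Nat.lt_of_lt_of_le Nat.zero_lt_two hn⟩ b h.ne
        else 0)
      = ((k : ℝ) + 1) • Matrix.of (fun x y : Fin n → Fin q =>
          E0 q (x ⟨0, Nat.lt_of_lt_of_le Nat.zero_lt_two hn⟩) (y ⟨0, Nat.lt_of_lt_of_le Nat.zero_lt_two hn⟩) *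
            Ek q (n - 1) (k + 1)
              (fun i => x ⟨i.1 + 1, by have := i.isLt; omega⟩)
              (fun i => y ⟨i.1 + 1, by have := i.isLt; omega⟩)) := by
  have hq0 : (q : ℝ) ≠ 0 := Nat.cast_ne_zero.mpr (by omega)
  set z0 : Fin n := ⟨0, Nat.lt_of_lt_of_le Nat.zero_lt_two hn⟩ with hz0
  have hcard1 : ({z0}ᶜ : Finset (Fin n)).card = n - 1 := by
    rw [Finset.card_compl, Finset.card_singleton, Fintype.card_fin]
  ext y y'
  rw [Matrix.sum_apply]
  have key : ∀ b : Fin n,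
      (if h : z0 < b then
          (subMat (tens n q (F' q) k) z0 b h.ne)ᵀ * subMat (tens n q (F' q) k) z0 b h.ne
        else 0) y y'
      = if z0 < b then
          ∑ S ∈ Finset.powersetCard k ({z0, b}ᶜ : Finset (Fin n)),
            ∏ i, (if i ∈ insert b S then E1 q (y i) (y' i) else E0 q (y i) (y' i))
        else 0 := by
    intro b
    by_cases hb : z0 < b
    · rw [dif_pos hb, if_pos hb, entry_eq n q k hq z0 b hb.ne y y']
      have hEk : Ek q (n - 2) k (fun i => y (embCompl z0 b hb.ne i))
            (fun i => y' (embCompl z0 b hb.ne i))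
          = ∑ S ∈ Finset.powersetCard k ({z0, b}ᶜ : Finset (Fin n)),
              ∏ j ∈ ({z0, b}ᶜ : Finset (Fin n)),
                (if j ∈ S then E1 q (y j) (y' j) else E0 q (y j) (y' j)) := by
        rw [Ek]
        exact sum_powersetCard_reindex ({z0, b}ᶜ) (embCompl z0 b hb.ne)
          (embCompl_injective z0 b hb.ne) (embCompl_mem z0 b hb.ne)
          (card_compl_pair z0 b hb.ne) k
          (fun j => E1 q (y j) (y' j)) (fun j => E0 q (y j) (y' j))
      rw [hEk, Finset.mul_sum]
      refine Finset.sum_congr rfl fun S hS => ?_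
      have hS' := Finset.mem_powersetCard.mp hS
      have hz0nb : z0 ∉ insert b S := by
        intro hc
        rcases Finset.mem_insert.mp hc with h0 | h0
        · exact hb.ne h0
        · have := hS'.1 h0
          rw [Finset.mem_compl] at this
          exact this (Finset.mem_insert_self _ _)
      rw [← Finset.prod_mul_prod_compl ({z0, b} : Finset (Fin n))
            (fun i => if i ∈ insert b S then E1 q (y i) (y' i) else E0 q (y i) (y' i)),
          Finset.prod_pair hb.ne]
      simp only [if_neg hz0nb, if_pos (Finset.mem_insert_self b S)]
      have hprod : ∏ j ∈ ({z0, b}ᶜ : Finset (Fin n)),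
            (if j ∈ insert b S then E1 q (y j) (y' j) else E0 q (y j) (y' j))
          = ∏ j ∈ ({z0, b}ᶜ : Finset (Fin n)),
            (if j ∈ S then E1 q (y j) (y' j) else E0 q (y j) (y' j)) := by
        refine Finset.prod_congr rfl fun j hj => ?_
        rw [Finset.mem_compl] at hj
        have hjb : j ≠ b := fun hc => hj (by
          rw [hc]; exact Finset.mem_insert_of_mem (Finset.mem_singleton_self b))
        by_cases hjS : j ∈ S
        · rw [if_pos hjS, if_pos (Finset.mem_insert_of_mem hjS)]
        · rw [if_neg hjS, if_neg (fun hc =>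
            (Finset.mem_insert.mp hc).elim (fun h0 => hjb h0) hjS)]
      rw [hprod]
      simp only [E0, Matrix.of_apply]
    · rw [dif_neg hb, if_neg hb]
      rfl
  rw [Finset.sum_congr rfl fun b _ => key b, ← Finset.sum_filter]
  have hfil : Finset.univ.filter (fun b => z0 < b) = ({z0}ᶜ : Finset (Fin n)) := by
    ext b
    simp only [Finset.mem_filter, Finset.mem_univ, true_and, Finset.mem_compl,
      Finset.mem_singleton, Fin.lt_def, Fin.ext_iff, hz0]
    omega
  rw [hfil, sum_insert_swap z0 k
    (fun T => ∏ i, (if i ∈ T then E1 q (y i) (y' i) else E0 q (y i) (y' i)))]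
  rw [Matrix.smul_apply, Matrix.of_apply, smul_eq_mul]
  have hR : Ek q (n - 1) (k + 1)
        (fun i : Fin (n - 1) => y ⟨i.1 + 1, by have := i.isLt; omega⟩)
        (fun i : Fin (n - 1) => y' ⟨i.1 + 1, by have := i.isLt; omega⟩)
      = ∑ T ∈ Finset.powersetCard (k + 1) ({z0}ᶜ : Finset (Fin n)),
          ∏ j ∈ ({z0}ᶜ : Finset (Fin n)),
            (if j ∈ T then E1 q (y j) (y' j) else E0 q (y j) (y' j)) := by
    rw [Ek]
    refine sum_powersetCard_reindex ({z0}ᶜ)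
      (fun i : Fin (n - 1) => (⟨i.1 + 1, by have := i.isLt; omega⟩ : Fin n)) ?_ ?_ hcard1 (k + 1)
      (fun j => E1 q (y j) (y' j)) (fun j => E0 q (y j) (y' j))
    · intro i j hij
      have : i.1 + 1 = j.1 + 1 := congrArg Fin.val hij
      exact Fin.ext (by omega)
    · intro i
      rw [Finset.mem_compl, Finset.mem_singleton]
      intro hc
      have : i.1 + 1 = (0 : ℕ) := congrArg Fin.val (hc.trans hz0)
      omega
  rw [hR, Finset.mul_sum, Finset.mul_sum]
  refine Finset.sum_congr rfl fun T hT => ?_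
  have hT' := Finset.mem_powersetCard.mp hT
  have hz0T : z0 ∉ T := fun hc => by
    have := hT'.1 hc
    rw [Finset.mem_compl, Finset.mem_singleton] at this
    exact this rfl
  rw [← Finset.prod_mul_prod_compl ({z0} : Finset (Fin n))
        (fun i => if i ∈ T then E1 q (y i) (y' i) else E0 q (y i) (y' i)),
      Finset.prod_singleton, if_neg hz0T]
end
end

section
/- Let m ≥ 1, q ≥ 1, and let α₀, α₁, …, α_m be real numbers. Then for all x, y ∈ [q]^m with x₁ ≠ y₁, the (x,y) entry of Σ_{k=0}^{m} α_k E_k^{(m)} equals the (x,y) entry of E₀ ⊗ (Σ_{k=0}^{m−1} (α_k − α_{k+1}) E_k^{(m−1)}), where the factor E₀ acts on the first coordinate. -/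
noncomputable section

namespace ED

section Aux
open Finset

variable {n q : ℕ} (x y : Fin (n+1) → Fin q)

lemma notmem_map_succ (u : Finset (Fin n)) : (0 : Fin (n+1)) ∉ u.map (Fin.succEmb n) := by
  simp [Finset.mem_map, Fin.succEmb, Fin.succ_ne_zero, eq_comm]

lemma filter_notmem_eq (c : ℕ) :
    (powersetCard c (univ : Finset (Fin (n+1)))).filter (fun S => (0 : Fin (n+1)) ∉ S)
      = (powersetCard c (univ : Finset (Fin n))).image (fun S' => S'.map (Fin.succEmb n)) := by
  ext S
  simp only [mem_filter, mem_powersetCard_univ, mem_image]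
  constructor
  · rintro ⟨hc, h0⟩
    have hsub : S ⊆ (univ : Finset (Fin n)).map (Fin.succEmb n) := by
      intro a ha
      have ha0 : a ≠ 0 := fun h => h0 (h ▸ ha)
      refine mem_map.2 ⟨a.pred ha0, mem_univ _, ?_⟩
      simp [Fin.succEmb]
    obtain ⟨u, -, rfl⟩ := Finset.subset_map_iff.1 hsub
    exact ⟨u, by simpa using hc, rfl⟩
  · rintro ⟨u, hu, rfl⟩
    exact ⟨by simpa using hu, notmem_map_succ u⟩

lemma filter_mem_eq (c : ℕ) :
    (powersetCard (c+1) (univ : Finset (Fin (n+1)))).filter (fun S => (0 : Fin (n+1)) ∈ S)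
      = (powersetCard c (univ : Finset (Fin n))).image
          (fun S' => insert 0 (S'.map (Fin.succEmb n))) := by
  ext S
  simp only [mem_filter, mem_powersetCard_univ, mem_image]
  constructor
  · rintro ⟨hc, h0⟩
    have hsub : S.erase 0 ⊆ (univ : Finset (Fin n)).map (Fin.succEmb n) := by
      intro a ha
      have ha0 : a ≠ 0 := (mem_erase.1 ha).1
      refine mem_map.2 ⟨a.pred ha0, mem_univ _, ?_⟩
      simp [Fin.succEmb]
    obtain ⟨u, -, hu⟩ := Finset.subset_map_iff.1 hsub
    refine ⟨u, ?_, ?_⟩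
    · have : (S.erase 0).card = c := by rw [card_erase_of_mem h0, hc]; rfl
      rw [hu, card_map] at this; exact this
    · rw [← hu, insert_erase h0]
  · rintro ⟨u, hu, rfl⟩
    have h0 := notmem_map_succ u
    refine ⟨?_, mem_insert_self _ _⟩
    rw [card_insert_of_notMem h0, card_map, hu]

lemma succ_mem_insert_iff (u : Finset (Fin n)) (j : Fin n) :
    (Fin.succ j ∈ insert 0 (u.map (Fin.succEmb n))) ↔ j ∈ u := by
  simp [Fin.succ_ne_zero, Fin.succEmb]

lemma sum_part_notmem (c : ℕ) :
    ∑ S ∈ (powersetCard c (univ : Finset (Fin (n+1)))).filter (fun S => (0 : Fin (n+1)) ∉ S),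
      ∏ i, (if i ∈ S then E1 q (x i) (y i) else E0 q (x i) (y i))
    = (1/q) * Ek q n c (fun i => x i.succ) (fun i => y i.succ) := by
  rw [filter_notmem_eq, Finset.sum_image (fun a _ b _ h => Finset.map_injective _ h)]
  rw [Ek, Matrix.of_apply, Finset.mul_sum]
  refine Finset.sum_congr rfl fun u _ => ?_
  rw [Fin.prod_univ_succ]
  congr 1
  · rw [if_neg (notmem_map_succ u)]; rfl
  · refine Finset.prod_congr rfl fun j _ => ?_
    have hj : j.succ ∈ u.map (Fin.succEmb n) ↔ j ∈ u := Finset.mem_map' (Fin.succEmb n)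
    simp only [hj]

lemma sum_part_mem (c : ℕ) (hxy : x 0 ≠ y 0) :
    ∑ S ∈ (powersetCard (c+1) (univ : Finset (Fin (n+1)))).filter
        (fun S => (0 : Fin (n+1)) ∈ S),
      ∏ i, (if i ∈ S then E1 q (x i) (y i) else E0 q (x i) (y i))
    = -(1/q) * Ek q n c (fun i => x i.succ) (fun i => y i.succ) := by
  rw [filter_mem_eq]
  rw [Finset.sum_image ?inj]
  case inj =>
    intro a _ b _ h
    have := congrArg (fun s => Finset.erase s (0 : Fin (n+1))) h
    simp only [Finset.erase_insert (notmem_map_succ a), Finset.erase_insert (notmem_map_succ b)]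
      at this
    exact Finset.map_injective _ this
  rw [Ek, Matrix.of_apply, Finset.mul_sum]
  refine Finset.sum_congr rfl fun u _ => ?_
  rw [Fin.prod_univ_succ]
  congr 1
  · rw [if_pos (mem_insert_self _ _), E1, Matrix.of_apply, if_neg hxy]
    ring
  · refine Finset.prod_congr rfl fun j _ => ?_
    simp only [succ_mem_insert_iff]

lemma Ek_succ (c : ℕ) (hxy : x 0 ≠ y 0) :
    Ek q (n+1) (c+1) x y
      = (1/q) * Ek q n (c+1) (fun i => x i.succ) (fun i => y i.succ)
        - (1/q) * Ek q n c (fun i => x i.succ) (fun i => y i.succ) := by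
  rw [Ek, Matrix.of_apply,
    ← Finset.sum_filter_add_sum_filter_not _ (fun S => (0 : Fin (n+1)) ∈ S),
    sum_part_mem x y c hxy, sum_part_notmem x y (c+1)]
  ring

lemma Ek_zero' (q' m' : ℕ) (x' y' : Fin m' → Fin q') :
    Ek q' m' 0 x' y' = (1/q')^m' := by
  simp [Ek, E0]

lemma Ek_top : Ek q n (n+1) (fun i => x i.succ) (fun i => y i.succ) = 0 := by
  rw [Ek, Matrix.of_apply, Finset.powersetCard_eq_empty.2 (by simp), Finset.sum_empty]

lemma main (hxy : x 0 ≠ y 0) (α : ℕ → ℝ) :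
    (∑ k ∈ Finset.range (n + 2), α k * Ek q (n+1) k x y)
      = (1/q) * ∑ k ∈ Finset.range (n+1), (α k - α (k + 1)) *
            Ek q n k (fun i => x i.succ) (fun i => y i.succ) := by
  rw [Finset.sum_range_succ']
  have h0 : α 0 * Ek q (n+1) 0 x y
      = (1/q) * (α 0 * Ek q n 0 (fun i => x i.succ) (fun i => y i.succ)) := by
    simp only [Ek_zero']; ring
  have hs : ∀ k ∈ Finset.range (n+1),
      α (k+1) * Ek q (n+1) (k+1) x y
        = (1/q) * (α (k+1) * Ek q n (k+1) (fun i => x i.succ) (fun i => y i.succ)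
            - α (k+1) * Ek q n k (fun i => x i.succ) (fun i => y i.succ)) := by
    intro k _
    rw [Ek_succ x y k hxy]; ring
  rw [Finset.sum_congr rfl hs, h0, ← Finset.mul_sum, ← mul_add]
  congr 1
  rw [Finset.sum_sub_distrib]
  have h1 : ∑ k ∈ Finset.range (n+1),
        α (k+1) * Ek q n (k+1) (fun i => x i.succ) (fun i => y i.succ)
      = (∑ k ∈ Finset.range (n+1), α k * Ek q n k (fun i => x i.succ) (fun i => y i.succ))
        - α 0 * Ek q n 0 (fun i => x i.succ) (fun i => y i.succ) := by
    have h2 := Finset.sum_range_succ'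
      (fun k => α k * Ek q n k (fun i => x i.succ) (fun i => y i.succ)) (n+1)
    rw [Finset.sum_range_succ, Ek_top x y] at h2
    simp only [mul_zero, add_zero] at h2
    linarith [h2]
  rw [h1]
  simp only [sub_mul]
  rw [Finset.sum_sub_distrib]
  ring

end Aux

end ED

open ED in
/-- For `x, y ∈ [q]^m` with `x₁ ≠ y₁`, the `(x,y)` entry of `Σ_k α_k E_k^{(m)}` equals the
`(x,y)` entry of `E₀ ⊗ (Σ_k (α_k − α_{k+1}) E_k^{(m−1)})`, the factor `E₀` acting on the
first coordinate. -/
theorem stmt8 (m q : ℕ) (hm : 1 ≤ m) (hq : 1 ≤ q) (α : ℕ → ℝ)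
    (x y : Fin m → Fin q) (hxy : x ⟨0, hm⟩ ≠ y ⟨0, hm⟩) :
    (∑ k ∈ Finset.range (m + 1), α k * Ek q m k x y)
      = E0 q (x ⟨0, hm⟩) (y ⟨0, hm⟩) *
          ∑ k ∈ Finset.range m, (α k - α (k + 1)) *
            Ek q (m - 1) k
              (fun i => x ⟨i.1 + 1, by have := i.isLt; omega⟩)
              (fun i => y ⟨i.1 + 1, by have := i.isLt; omega⟩) := by
  obtain ⟨n, rfl⟩ : ∃ n, m = n + 1 := ⟨m - 1, by omega⟩
  exact ED.main x y hxy α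
end
end
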